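/- arXiv:2008.09543 — 5 statements merged into one kernel-verified Lean document; each statement's English description precedes it below -/
import Mathlib

section
/- For s ∈ (0,∞), the function ψ_s(√s · t) converges pointwise to t²/2 as s → ∞, for every fixed t ≥ 0. -/
/-! Writing `u = 4 (x / s)²`, one has `ψ_s(x) = (s / 2) g(u)` with
`g(u) = √(1 + u) - log ((1 + √(1 + u)) / 2) - 1`. At `x = √s t` this is `u = 4 t² / s → 0`, and
`(s / 2) g(4 t² / s) = 2 t² · g(u) / u → 2 t² g'(0) = t² / 2` since `g(0) = 0` and `g'(0) = 1 / 4`. -/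

noncomputable def psiS (s t : ℝ) : ℝ :=
  s / 2 * (Real.sqrt (1 + 4 * (t / s) ^ 2)
    - Real.log ((1 + Real.sqrt (1 + 4 * (t / s) ^ 2)) / 2) - 1)

open Filter Topology

theorem HasDerivAt.tendsto_mul_comp_div_atTop {g : ℝ → ℝ} {g' : ℝ} (hg : HasDerivAt g g' 0)
    (hg0 : g 0 = 0) (c : ℝ) : Tendsto (fun x => x * g (c / x)) atTop (𝓝 (c * g')) := by
  rcases eq_or_ne c 0 with rfl | hc
  · simp [hg0]
  have hdiv : Tendsto (fun x : ℝ => c / x) atTop (𝓝[≠] 0) :=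
    tendsto_nhdsWithin_of_tendsto_nhds_of_eventually_within _
      (tendsto_const_nhds.div_atTop tendsto_id)
      (eventually_ne_atTop 0 |>.mono fun x hx => div_ne_zero hc hx)
  refine ((hasDerivAt_iff_tendsto_slope.mp hg).comp hdiv |>.const_mul c).congr' ?_
  filter_upwards [eventually_ne_atTop 0] with x hx
  simp only [Function.comp_apply, slope_def_field, hg0, sub_zero]
  field_simp

noncomputable def psiProfile (u : ℝ) : ℝ :=
  Real.sqrt (1 + u) - Real.log ((1 + Real.sqrt (1 + u)) / 2) - 1

lemma psiProfile_zero : psiProfile 0 = 0 := by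
  simp [psiProfile]

lemma hasDerivAt_psiProfile {u : ℝ} (hu : -1 < u) :
    HasDerivAt psiProfile (1 / (2 * (1 + Real.sqrt (1 + u)))) u := by
  have hr : 0 < Real.sqrt (1 + u) := Real.sqrt_pos.mpr (by linarith)
  have hsqrt : HasDerivAt (fun v => Real.sqrt (1 + v)) (1 / (2 * Real.sqrt (1 + u))) u := by
    simpa using ((hasDerivAt_id u).const_add 1).sqrt (by simp; linarith)
  have hlog := ((hsqrt.const_add 1).div_const 2).log (by positivity)
  refine ((hsqrt.sub hlog).sub_const 1).congr_deriv ?_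
  field_simp
  ring

lemma psiS_eq_psiProfile (s x : ℝ) : psiS s x = s / 2 * psiProfile (4 * (x / s) ^ 2) := rfl

theorem stmt_3_general (t : ℝ) :
    Filter.Tendsto (fun s : ℝ => psiS s (Real.sqrt s * t)) Filter.atTop
      (nhds (t ^ 2 / 2)) := by
  have hderiv : HasDerivAt psiProfile (1 / 4) 0 := by
    convert hasDerivAt_psiProfile (u := 0) (by norm_num) using 1
    norm_num
  have hlim := (hderiv.tendsto_mul_comp_div_atTop psiProfile_zero (4 * t ^ 2)).const_mul (1 / 2)
  rw [show 1 / 2 * (4 * t ^ 2 * (1 / 4)) = t ^ 2 / 2 by ring] at hlim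
  refine hlim.congr' ?_
  filter_upwards [eventually_gt_atTop 0] with s hs
  have hu : 4 * (Real.sqrt s * t / s) ^ 2 = 4 * t ^ 2 / s := by
    rw [div_pow, mul_pow, Real.sq_sqrt hs.le]
    field_simp
  rw [psiS_eq_psiProfile, hu]
  ring

theorem stmt_3 (t : ℝ) (ht : 0 ≤ t) :
    Filter.Tendsto (fun s : ℝ => psiS s (Real.sqrt s * t)) Filter.atTop
      (nhds (t ^ 2 / 2)) :=
  stmt_3_general t
end

section
/- For every y ∈ ℝ^d, inf over x in the open unit ball of e^{-⟨x,y⟩}/(1 - |x|²) equals ((1 + √(1 + |y|²))/2)·exp(1 - √(1 + |y|²)). -/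
/-!
Write `c = ‖y‖` and `s = √(1 + c²)`. By Cauchy–Schwarz the function is at least
`exp (-r c) / (1 - r²)` with `r = ‖x‖`, and the tangent line of `exp` at `1 - s` gives
`exp (-r c) ≥ exp (1 - s) (s - r c)`. Because `s² = 1 + c²`, the difference
`2 (s - r c) - (1 + s) (1 - r²)` equals `((1 + s) r - c)² / (1 + s) ≥ 0`, so the function is
at least `(1 + s) / 2 · exp (1 - s)`. Equality holds throughout at `x = y / (1 + s)`.
-/

open RealInnerProductSpace

lemma one_add_sqrt_mul_one_sub_sq_le (r c : ℝ) :
    (1 + √(1 + c ^ 2)) * (1 - r ^ 2) ≤ 2 * (√(1 + c ^ 2) - r * c) := by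
  have hs : √(1 + c ^ 2) ^ 2 = 1 + c ^ 2 := Real.sq_sqrt (by positivity)
  have hs1 : 1 ≤ √(1 + c ^ 2) := Real.one_le_sqrt.mpr (by nlinarith)
  nlinarith [sq_nonneg ((1 + √(1 + c ^ 2)) * r - c)]

lemma exp_one_sub_mul_sub_le_exp_neg (s t : ℝ) : Real.exp (1 - s) * (s - t) ≤ Real.exp (-t) :=
  calc Real.exp (1 - s) * (s - t)
      ≤ Real.exp (1 - s) * Real.exp (s - t - 1) := by
        gcongr; linarith [Real.add_one_le_exp (s - t - 1)]
    _ = Real.exp (-t) := by rw [← Real.exp_add]; ring_nf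

section InnerProductSpace

variable {E : Type*} [NormedAddCommGroup E] [InnerProductSpace ℝ E]

lemma le_exp_neg_inner_div_one_sub_norm_sq {x : E} (y : E) (hx : ‖x‖ < 1) :
    (1 + √(1 + ‖y‖ ^ 2)) / 2 * Real.exp (1 - √(1 + ‖y‖ ^ 2))
      ≤ Real.exp (-⟪x, y⟫) / (1 - ‖x‖ ^ 2) := by
  have hpos : 0 < 1 - ‖x‖ ^ 2 := by nlinarith [norm_nonneg x]
  rw [le_div_iff₀ hpos]
  calc (1 + √(1 + ‖y‖ ^ 2)) / 2 * Real.exp (1 - √(1 + ‖y‖ ^ 2)) * (1 - ‖x‖ ^ 2)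
      ≤ Real.exp (1 - √(1 + ‖y‖ ^ 2)) * (√(1 + ‖y‖ ^ 2) - ‖x‖ * ‖y‖) := by
        nlinarith [one_add_sqrt_mul_one_sub_sq_le ‖x‖ ‖y‖,
          Real.exp_pos (1 - √(1 + ‖y‖ ^ 2))]
    _ ≤ Real.exp (-(‖x‖ * ‖y‖)) := exp_one_sub_mul_sub_le_exp_neg _ _
    _ ≤ Real.exp (-⟪x, y⟫) := Real.exp_le_exp.mpr (neg_le_neg (real_inner_le_norm x y))

lemma norm_inv_one_add_sqrt_smul_lt_one (y : E) : ‖(1 + √(1 + ‖y‖ ^ 2))⁻¹ • y‖ < 1 := by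
  have hs : ‖y‖ < √(1 + ‖y‖ ^ 2) := Real.lt_sqrt_of_sq_lt (by linarith)
  rw [norm_smul, norm_inv, Real.norm_of_nonneg (by positivity), inv_mul_lt_one₀ (by positivity)]
  linarith

lemma exp_neg_inner_div_one_sub_norm_sq_inv_one_add_sqrt_smul (y : E) :
    Real.exp (-⟪(1 + √(1 + ‖y‖ ^ 2))⁻¹ • y, y⟫) / (1 - ‖(1 + √(1 + ‖y‖ ^ 2))⁻¹ • y‖ ^ 2)
      = (1 + √(1 + ‖y‖ ^ 2)) / 2 * Real.exp (1 - √(1 + ‖y‖ ^ 2)) := by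
  set s := √(1 + ‖y‖ ^ 2)
  have hy : ‖y‖ ^ 2 = (s - 1) * (1 + s) := by
    linear_combination (-1 : ℝ) * Real.sq_sqrt (by positivity : (0 : ℝ) ≤ 1 + ‖y‖ ^ 2)
  have hs : 0 < 1 + s := by positivity
  have hinner : ⟪(1 + s)⁻¹ • y, y⟫ = s - 1 := by
    rw [real_inner_smul_left, real_inner_self_eq_norm_sq, hy]; field_simp
  have hnorm : 1 - ‖(1 + s)⁻¹ • y‖ ^ 2 = 2 / (1 + s) := by
    rw [norm_smul, mul_pow, norm_inv, Real.norm_of_nonneg hs.le, hy]; field_simp; ring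
  rw [hinner, hnorm, neg_sub]
  field_simp

theorem iInf_ball_exp_neg_inner_div_one_sub_norm_sq (y : E) :
    ⨅ x : Metric.ball (0 : E) 1, Real.exp (-⟪(x : E), y⟫) / (1 - ‖(x : E)‖ ^ 2)
      = (1 + √(1 + ‖y‖ ^ 2)) / 2 * Real.exp (1 - √(1 + ‖y‖ ^ 2)) := by
  have hlower : ∀ x : Metric.ball (0 : E) 1,
      (1 + √(1 + ‖y‖ ^ 2)) / 2 * Real.exp (1 - √(1 + ‖y‖ ^ 2))
        ≤ Real.exp (-⟪(x : E), y⟫) / (1 - ‖(x : E)‖ ^ 2) :=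
    fun x ↦ le_exp_neg_inner_div_one_sub_norm_sq y (mem_ball_zero_iff.mp x.2)
  let x₀ : Metric.ball (0 : E) 1 :=
    ⟨(1 + √(1 + ‖y‖ ^ 2))⁻¹ • y, mem_ball_zero_iff.mpr (norm_inv_one_add_sqrt_smul_lt_one y)⟩
  exact le_antisymm
    ((ciInf_le ⟨_, Set.forall_mem_range.mpr hlower⟩ x₀).trans_eq
      (exp_neg_inner_div_one_sub_norm_sq_inv_one_add_sqrt_smul y))
    (le_ciInf hlower)

end InnerProductSpace

theorem stmt_4 (d : ℕ) (y : EuclideanSpace ℝ (Fin d)) :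
    (⨅ x : Metric.ball (0 : EuclideanSpace ℝ (Fin d)) 1,
        Real.exp (-⟪(x : EuclideanSpace ℝ (Fin d)), y⟫) / (1 - ‖(x : EuclideanSpace ℝ (Fin d))‖ ^ 2))
      = (1 + Real.sqrt (1 + ‖y‖ ^ 2)) / 2 * Real.exp (1 - Real.sqrt (1 + ‖y‖ ^ 2)) :=
  iInf_ball_exp_neg_inner_div_one_sub_norm_sq y
end

section
/- Let f: ℝ^d → [0,∞) be upper semi-continuous, log-concave, with finite positive integral. Suppose the superlevel set {f ≥ Θ} contains ϑB^d (Θ = ‖f‖_∞/2, ϑ > 0), and f ≤ ℓ where ℓ is log-concave with maximum α attained at a. Then the convex hull of ϑB^d and {a} is contained in {ℓ ≥ Θ}, and hence ∫ℓ ≥ Θ · ϑ^{d-1}·vol_{d-1}(B^{d-1})·|a|/d. -/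
/-!
Superlevel sets of a nonnegative log-concave function are convex, so `{ℓ ≥ Θ}` contains the convex
hull of the ball `ϑB ⊆ {f ≥ Θ} ⊆ {ℓ ≥ Θ}` and of the maximiser `a` (where `ℓ a = α ≥ f 0 ≥ Θ`).
That hull contains a right circular cone of height `‖a‖` over a `(d-1)`-dimensional `ϑ`-ball:
after a reflection taking `‖a‖ e₀` to `a`, each slice `x 0 = t` of the cone is a ball of radius
`ϑ (1 - t/‖a‖)`, and Fubini gives the volume `ϑ^(d-1) vol(B^(d-1)) ‖a‖ / d`.
Markov's inequality `Θ · vol{ℓ ≥ Θ} ≤ ∫ ℓ` finishes the proof.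
-/

open MeasureTheory Metric
open scoped Pointwise

theorem integral_one_sub_div_pow (n : ℕ) {h : ℝ} (hh : h ≠ 0) :
    ∫ t in (0 : ℝ)..h, (1 - t / h) ^ n = h / (n + 1) := by
  rw [intervalIntegral.integral_comp_div (fun s => (1 - s) ^ n) hh,
    intervalIntegral.integral_comp_sub_left (fun s => s ^ n), integral_pow]
  simp [div_self hh, div_eq_mul_inv]

def LogConcave {E : Type*} [AddCommGroup E] [Module ℝ E] (ℓ : E → ℝ) : Prop :=
  ∀ x y : E, ∀ p q : ℝ, 0 ≤ p → 0 ≤ q → p + q = 1 → ℓ x ^ p * ℓ y ^ q ≤ ℓ (p • x + q • y)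

theorem LogConcave.convex_ge {E : Type*} [AddCommGroup E] [Module ℝ E] {ℓ : E → ℝ}
    (hℓ : LogConcave ℓ) (hℓ0 : ∀ x, 0 ≤ ℓ x) (r : ℝ) : Convex ℝ {x | r ≤ ℓ x} := by
  intro x hx y hy p q hp hq hpq
  set m := min (ℓ x) (ℓ y)
  have hmx : m ≤ ℓ x := min_le_left _ _
  have hmy : m ≤ ℓ y := min_le_right _ _
  have hm : 0 ≤ m := le_min (hℓ0 x) (hℓ0 y)
  calc r ≤ m := le_min (α := ℝ) hx hy
    _ = m ^ p * m ^ q := by rw [← Real.rpow_add' hm (by simp [hpq]), hpq, Real.rpow_one]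
    _ ≤ ℓ x ^ p * ℓ y ^ q := by
      gcongr
      exact Real.rpow_nonneg (hℓ0 x) p
    _ ≤ ℓ (p • x + q • y) := hℓ x y p q hp hq hpq

theorem ofReal_mul_measure_le_lintegral_ofReal {α : Type*} [MeasurableSpace α] {μ : Measure α}
    {g : α → ℝ} {s : Set α} {r : ℝ} (hs : NullMeasurableSet s μ) (hsub : s ⊆ {x | r ≤ g x}) :
    ENNReal.ofReal r * μ s ≤ ∫⁻ x, ENNReal.ofReal (g x) ∂μ := by
  rw [← lintegral_indicator_const₀ hs]
  exact lintegral_mono fun x =>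
    Set.indicator_apply_le' (fun hx => ENNReal.ofReal_le_ofReal (hsub hx)) fun _ => zero_le

theorem mem_convexHull_closedBall_union_singleton {E : Type*} [NormedAddCommGroup E]
    [NormedSpace ℝ E] {x p : E} {r t : ℝ} (hr : 0 ≤ r) (ht0 : 0 ≤ t) (ht1 : t ≤ 1)
    (hx : ‖x - t • p‖ ≤ (1 - t) * r) : x ∈ convexHull ℝ (closedBall 0 r ∪ {p}) := by
  obtain ⟨w, hw, hxw : (1 - t) • w = x - t • p⟩ : x - t • p ∈ (1 - t) • closedBall (0 : E) r := by
    rwa [smul_closedBall _ _ hr, smul_zero, mem_closedBall_zero_iff,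
      Real.norm_of_nonneg (by linarith)]
  refine segment_subset_convexHull (Set.mem_union_left _ hw)
    (Set.mem_union_right _ (Set.mem_singleton p)) ⟨1 - t, t, by linarith, ht0, by ring, ?_⟩
  rw [hxw, sub_add_cancel]

/-- The cone with apex `h • e₀` over the `ϑ`-ball of the hyperplane `x 0 = 0`. -/
def solidCone (n : ℕ) (ϑ h : ℝ) : Set (EuclideanSpace ℝ (Fin (n + 1))) :=
  {x | x 0 ∈ Set.Icc 0 h ∧ ∑ i : Fin n, x i.succ ^ 2 ≤ (ϑ * (1 - x 0 / h)) ^ 2}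

theorem volume_setOf_sum_sq_le (n : ℕ) {ρ : ℝ} (hρ : 0 ≤ ρ) :
    volume {y : Fin n → ℝ | ∑ i, y i ^ 2 ≤ ρ ^ 2} =
      ENNReal.ofReal (ρ ^ n) * volume (closedBall (0 : EuclideanSpace ℝ (Fin n)) 1) := by
  have : {y : Fin n → ℝ | ∑ i, y i ^ 2 ≤ ρ ^ 2} = WithLp.toLp 2 ⁻¹' closedBall 0 ρ := by
    ext y
    simp [← sq_le_sq₀ (norm_nonneg _) hρ, EuclideanSpace.norm_sq_eq]
  rw [this, (PiLp.volume_preserving_toLp (Fin n)).measure_preimage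
    measurableSet_closedBall.nullMeasurableSet, Measure.addHaar_closedBall' _ _ hρ,
    finrank_euclideanSpace_fin]

theorem volume_solidCone (n : ℕ) {ϑ h : ℝ} (hϑ : 0 ≤ ϑ) (hh : 0 < h) :
    volume (solidCone n ϑ h) = ENNReal.ofReal (ϑ ^ n * (h / (n + 1))) *
      volume (closedBall (0 : EuclideanSpace ℝ (Fin n)) 1) := by
  set ρ : ℝ → ℝ := fun t => ϑ * (1 - t / h)
  have hρ : ∀ t ∈ Set.Icc 0 h, 0 ≤ ρ t := fun t ht =>
    mul_nonneg hϑ (sub_nonneg.2 (div_le_one_of_le₀ ht.2 hh.le))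
  set T : Set (ℝ × (Fin n → ℝ)) := {p | p.1 ∈ Set.Icc 0 h ∧ ∑ i, p.2 i ^ 2 ≤ ρ p.1 ^ 2}
  have hT : MeasurableSet T := by measurability
  have hcone : solidCone n ϑ h =
      (MeasurableEquiv.piFinSuccAbove (fun _ => ℝ) 0 ∘ WithLp.ofLp) ⁻¹' T := by
    ext x
    simp [solidCone, T, ρ, MeasurableEquiv.piFinSuccAbove, Fin.tail]
  have hslice : ∀ t, volume (Prod.mk t ⁻¹' T) = (Set.Icc 0 h).indicator
      (fun t => ENNReal.ofReal (ρ t ^ n) *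
        volume (closedBall (0 : EuclideanSpace ℝ (Fin n)) 1)) t := by
    intro t
    by_cases ht : t ∈ Set.Icc 0 h
    · rw [Set.indicator_of_mem ht, ← volume_setOf_sum_sq_le n (hρ t ht)]
      simp only [T, Set.preimage_ofPred_eq, ht, true_and]
    · simp only [T, Set.preimage_ofPred_eq, ht, false_and, Set.ofPred_false, measure_empty,
        Set.indicator_of_notMem ht]
  rw [hcone, ((volume_preserving_piFinSuccAbove _ 0).comp
      (PiLp.volume_preserving_ofLp _)).measure_preimage hT.nullMeasurableSet,
    Measure.volume_eq_prod, Measure.prod_apply hT, lintegral_congr hslice,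
    lintegral_indicator measurableSet_Icc, lintegral_mul_const _ (by fun_prop),
    ← ofReal_integral_eq_lintegral_ofReal
      (by fun_prop : Continuous fun t => ρ t ^ n).integrableOn_Icc
      ((ae_restrict_mem measurableSet_Icc).mono fun t ht => pow_nonneg (hρ t ht) n),
    integral_Icc_eq_integral_Ioc, ← intervalIntegral.integral_of_le hh.le]
  simp only [ρ, mul_pow]
  rw [intervalIntegral.integral_const_mul, integral_one_sub_div_pow n hh.ne']

theorem solidCone_subset_convexHull (n : ℕ) {ϑ h : ℝ} (hϑ : 0 ≤ ϑ) (hh : 0 < h) :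
    solidCone n ϑ h ⊆ convexHull ℝ (closedBall 0 ϑ ∪ {EuclideanSpace.single 0 h}) := by
  rintro x ⟨⟨hx0, hxh⟩, hx⟩
  have ht1 : x 0 / h ≤ 1 := div_le_one_of_le₀ hxh hh.le
  refine mem_convexHull_closedBall_union_singleton hϑ (div_nonneg hx0 hh.le) ht1 ?_
  have hsmul : (x 0 / h) • EuclideanSpace.single (0 : Fin (n + 1)) h =
      EuclideanSpace.single 0 (x 0) := by
    ext j
    by_cases hj : j = 0 <;> simp [hj, div_mul_cancel₀ _ hh.ne']
  rw [hsmul, ← sq_le_sq₀ (norm_nonneg _) (mul_nonneg (sub_nonneg.2 ht1) hϑ),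
    EuclideanSpace.norm_sq_eq, Fin.sum_univ_succ]
  simpa [PiLp.single_apply, Fin.succ_ne_zero, mul_comm] using hx

theorem volume_convexHull_closedBall_union_singleton_ge (n : ℕ) {ϑ : ℝ} (hϑ : 0 ≤ ϑ)
    (a : EuclideanSpace ℝ (Fin (n + 1))) :
    ENNReal.ofReal (ϑ ^ n * (‖a‖ / (n + 1))) *
        volume (closedBall (0 : EuclideanSpace ℝ (Fin n)) 1) ≤
      volume (convexHull ℝ (closedBall 0 ϑ ∪ {a})) := by
  rcases eq_or_ne a 0 with rfl | ha
  · simp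
  set p := EuclideanSpace.single (0 : Fin (n + 1)) ‖a‖
  set R := Submodule.reflection (ℝ ∙ (p - a))ᗮ
  have hR : R p = a := Submodule.reflection_sub (by simp [p])
  have himage :
      R '' convexHull ℝ (closedBall 0 ϑ ∪ {p}) = convexHull ℝ (closedBall 0 ϑ ∪ {a}) := by
    rw [IsLinearMap.image_convexHull ⟨R.map_add, R.map_smul⟩, Set.image_union,
      R.image_closedBall, map_zero, Set.image_singleton, hR]
  rw [← volume_solidCone n hϑ (norm_pos_iff.2 ha), ← himage, R.image_eq_preimage_symm,
    R.symm.measurePreserving.measure_preimage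
      ((convex_convexHull ℝ _).nullMeasurableSet volume)]
  exact measure_mono (solidCone_subset_convexHull n hϑ (norm_pos_iff.2 ha))

theorem stmt_13_general (d : ℕ)
    (f ℓ : EuclideanSpace ℝ (Fin d) → ℝ)
    (Θ ϑ α : ℝ) (a : EuclideanSpace ℝ (Fin d))
    (hϑ : 0 < ϑ)
    (hball : Metric.closedBall (0 : EuclideanSpace ℝ (Fin d)) ϑ ⊆ {x | Θ ≤ f x})
    (hfl : ∀ x, f x ≤ ℓ x) (hℓ0 : ∀ x, 0 ≤ ℓ x)
    (hℓlc : ∀ x y : EuclideanSpace ℝ (Fin d), ∀ p q : ℝ, 0 ≤ p → 0 ≤ q → p + q = 1 →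
      ℓ x ^ p * ℓ y ^ q ≤ ℓ (p • x + q • y))
    (hmax : ∀ x, ℓ x ≤ α) (hla : ℓ a = α) :
    convexHull ℝ (Metric.closedBall (0 : EuclideanSpace ℝ (Fin d)) ϑ ∪ {a}) ⊆ {x | Θ ≤ ℓ x} ∧
    ENNReal.ofReal (Θ * ϑ ^ (d - 1) *
        (volume (Metric.closedBall (0 : EuclideanSpace ℝ (Fin (d - 1))) 1)).toReal * ‖a‖ / d)
      ≤ ∫⁻ x, ENNReal.ofReal (ℓ x) := by
  have hΘa : Θ ≤ ℓ a :=
    hla ▸ (hball (mem_closedBall_self hϑ.le)).trans ((hfl 0).trans (hmax 0))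
  have hhull : convexHull ℝ (closedBall 0 ϑ ∪ {a}) ⊆ {x | Θ ≤ ℓ x} :=
    convexHull_min
      (Set.union_subset (fun x hx => (hball hx).trans (hfl x)) (Set.singleton_subset_iff.2 hΘa))
      (LogConcave.convex_ge hℓlc hℓ0 Θ)
  refine ⟨hhull, ?_⟩
  cases d with
  | zero => simp [Subsingleton.elim a 0]
  | succ n =>
    set B := volume (closedBall (0 : EuclideanSpace ℝ (Fin n)) 1)
    have hB : ENNReal.ofReal B.toReal = B := ENNReal.ofReal_toReal measure_closedBall_lt_top.ne
    calc ENNReal.ofReal (Θ * ϑ ^ (n + 1 - 1) * B.toReal * ‖a‖ / ↑(n + 1))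
        = ENNReal.ofReal (Θ * (ϑ ^ n * (‖a‖ / (n + 1)) * B.toReal)) := by
          congr 1
          push_cast
          ring_nf
      _ = ENNReal.ofReal Θ * (ENNReal.ofReal (ϑ ^ n * (‖a‖ / (n + 1))) * B) := by
          rw [ENNReal.ofReal_mul' (by positivity), ENNReal.ofReal_mul (by positivity), hB]
      _ ≤ ENNReal.ofReal Θ * volume (convexHull ℝ (closedBall 0 ϑ ∪ {a})) := by
          gcongr
          exact volume_convexHull_closedBall_union_singleton_ge n hϑ.le a
      _ ≤ ∫⁻ x, ENNReal.ofReal (ℓ x) :=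
          ofReal_mul_measure_le_lintegral_ofReal
            ((convex_convexHull ℝ _).nullMeasurableSet volume) hhull

theorem stmt_13 (d : ℕ) (hd : 1 ≤ d)
    (f ℓ : EuclideanSpace ℝ (Fin d) → ℝ)
    (hf0 : ∀ x, 0 ≤ f x) (hfusc : UpperSemicontinuous f)
    (hflc : ∀ x y : EuclideanSpace ℝ (Fin d), ∀ p q : ℝ, 0 ≤ p → 0 ≤ q → p + q = 1 →
      f x ^ p * f y ^ q ≤ f (p • x + q • y))
    (hfint : Integrable f) (hfpos : 0 < ∫ x, f x)
    (Θ ϑ α : ℝ) (a : EuclideanSpace ℝ (Fin d))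
    (hΘ : Θ = (⨆ x, f x) / 2) (hϑ : 0 < ϑ)
    (hball : Metric.closedBall (0 : EuclideanSpace ℝ (Fin d)) ϑ ⊆ {x | Θ ≤ f x})
    (hfl : ∀ x, f x ≤ ℓ x) (hℓ0 : ∀ x, 0 ≤ ℓ x)
    (hℓlc : ∀ x y : EuclideanSpace ℝ (Fin d), ∀ p q : ℝ, 0 ≤ p → 0 ≤ q → p + q = 1 →
      ℓ x ^ p * ℓ y ^ q ≤ ℓ (p • x + q • y))
    (hmax : ∀ x, ℓ x ≤ α) (hla : ℓ a = α) :
    convexHull ℝ (Metric.closedBall (0 : EuclideanSpace ℝ (Fin d)) ϑ ∪ {a}) ⊆ {x | Θ ≤ ℓ x} ∧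
    ENNReal.ofReal (Θ * ϑ ^ (d - 1) *
        (volume (Metric.closedBall (0 : EuclideanSpace ℝ (Fin (d - 1))) 1)).toReal * ‖a‖ / d)
      ≤ ∫⁻ x, ENNReal.ofReal (ℓ x) :=
  stmt_13_general d f ℓ Θ ϑ α a hϑ hball hfl hℓ0 hℓlc hmax hla
end

section
/- Let Φ: (t₀', ∞) → (0, ∞) be concave (t₀' = log‖f‖, t₀ > t₀') and satisfy Φ(t) ≤ Φ(t₀)e^{(t-t₀)/d} for all t in the domain. Then Φ(t) ≤ Φ(t₀)(1 + (t - t₀)/d) for all t, and consequently t₀ ≤ d + t₀'. -/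
/-!
Φ is squeezed under the smooth majorant `Φ t₀ * exp ((t - t₀) / d)`, which touches it at `t₀`.
Secant slopes of a concave function through `t₀` are antitone, and near `t₀` they are bounded
by the secant slopes of the majorant, which tend to its derivative `Φ t₀ / d`. Hence the tangent
line of the majorant at `t₀` is a supporting line of Φ. Positivity of Φ on `(t₀', ∞)` then forces
this line to stay positive there, i.e. its zero `t₀ - d` lies at or left of `t₀'`.
-/

open Set Filter Topology

namespace ConcaveOn

variable {s : Set ℝ} {f g : ℝ → ℝ} {x y m : ℝ}

lemma slope_le_of_hasDerivAt_majorant (hf : ConcaveOn ℝ s f) (hs : s ∈ 𝓝 x)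
    (hfg : ∀ z ∈ s, f z ≤ g z) (hx : f x = g x) (hg : HasDerivAt g m x) (hy : y ∈ s)
    (hxy : x < y) : slope f x y ≤ m := by
  have hslope : Tendsto (slope g x) (𝓝[>] x) (𝓝 m) :=
    (hasDerivAt_iff_tendsto_slope.1 hg).mono_left (nhdsWithin_mono _ fun _ hz ↦ ne_of_gt hz)
  refine ge_of_tendsto hslope ?_
  filter_upwards [Ioo_mem_nhdsGT hxy, nhdsWithin_le_nhds hs] with z hz hzs
  calc slope f x y ≤ slope f x z :=
        hf.antitoneOn_slope_gt (mem_of_mem_nhds hs) ⟨hzs, hz.1⟩ ⟨hy, hxy⟩ hz.2.le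
    _ ≤ slope g x z := by
        rw [slope_def_field, slope_def_field, hx]
        exact div_le_div_of_nonneg_right (by linarith [hfg z hzs]) (sub_pos.2 hz.1).le

lemma le_slope_of_hasDerivAt_majorant (hf : ConcaveOn ℝ s f) (hs : s ∈ 𝓝 x)
    (hfg : ∀ z ∈ s, f z ≤ g z) (hx : f x = g x) (hg : HasDerivAt g m x) (hy : y ∈ s)
    (hyx : y < x) : m ≤ slope f x y := by
  have hslope : Tendsto (slope g x) (𝓝[<] x) (𝓝 m) :=
    (hasDerivAt_iff_tendsto_slope.1 hg).mono_left (nhdsWithin_mono _ fun _ hz ↦ ne_of_lt hz)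
  refine le_of_tendsto hslope ?_
  filter_upwards [Ioo_mem_nhdsLT hyx, nhdsWithin_le_nhds hs] with z hz hzs
  calc slope g x z ≤ slope f x z := by
        rw [slope_def_field, slope_def_field, hx]
        exact div_le_div_of_nonpos_of_le (sub_neg.2 hz.2).le (by linarith [hfg z hzs])
    _ ≤ slope f x y :=
        hf.antitoneOn_slope_lt (mem_of_mem_nhds hs) ⟨hy, hyx⟩ ⟨hzs, hz.2⟩ hz.1.le

lemma le_add_mul_sub_of_hasDerivAt_majorant (hf : ConcaveOn ℝ s f) (hs : s ∈ 𝓝 x)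
    (hfg : ∀ z ∈ s, f z ≤ g z) (hx : f x = g x) (hg : HasDerivAt g m x) (hy : y ∈ s) :
    f y ≤ f x + m * (y - x) := by
  have hsecant : (y - x) * slope f x y = f y - f x := sub_smul_slope f x y
  rcases lt_trichotomy y x with hyx | rfl | hxy
  · nlinarith [hf.le_slope_of_hasDerivAt_majorant hs hfg hx hg hy hyx]
  · simp
  · nlinarith [hf.slope_le_of_hasDerivAt_majorant hs hfg hx hg hy hxy]

end ConcaveOn

theorem stmt_15 (Φ : ℝ → ℝ) (t₀' t₀ d : ℝ) (hd : 0 < d) (ht₀ : t₀ ∈ Set.Ioi t₀')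
    (hconc : ConcaveOn ℝ (Set.Ioi t₀') Φ)
    (hpos : ∀ t ∈ Set.Ioi t₀', 0 < Φ t)
    (hexp : ∀ t ∈ Set.Ioi t₀', Φ t ≤ Φ t₀ * Real.exp ((t - t₀) / d)) :
    (∀ t ∈ Set.Ioi t₀', Φ t ≤ Φ t₀ * (1 + (t - t₀) / d)) ∧ t₀ ≤ d + t₀' := by
  have hΦ₀ : 0 < Φ t₀ := hpos t₀ ht₀
  have hderiv : HasDerivAt (fun t ↦ Φ t₀ * Real.exp ((t - t₀) / d)) (Φ t₀ / d) t₀ := by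
    simpa [div_eq_mul_inv] using
      ((((hasDerivAt_id t₀).sub_const t₀).div_const d).exp.const_mul (Φ t₀))
  have hlin : ∀ t ∈ Ioi t₀', Φ t ≤ Φ t₀ * (1 + (t - t₀) / d) := fun t ht ↦ by
    have := hconc.le_add_mul_sub_of_hasDerivAt_majorant (isOpen_Ioi.mem_nhds ht₀) hexp
      (by simp) hderiv ht
    linarith [show Φ t₀ + Φ t₀ / d * (t - t₀) = Φ t₀ * (1 + (t - t₀) / d) by ring]
  refine ⟨hlin, ?_⟩
  suffices t₀ - d ≤ t₀' by linarith
  refine le_of_forall_gt_imp_ge_of_dense fun t ht ↦ ?_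
  have hline : 0 < Φ t₀ * ((t - (t₀ - d)) / d) := by
    rw [show (t - (t₀ - d)) / d = 1 + (t - t₀) / d by field_simp; ring]
    exact (hpos t ht).trans_le (hlin t ht)
  exact (sub_pos.1 (div_pos_iff_of_pos_right hd |>.1 (pos_of_mul_pos_right hline hΦ₀.le))).le
end

section
/- Let f: ℝ^d → [0,∞) be log-concave with f(0) = ‖f‖_∞ = e^{-d} and f(x) ≤ e^{-|x|} for all x. Fix a unit vector u, let f_u(t) = f(tu), and suppose for every ε ∈ (0,1) there exists r > 1/ε with f_u((1-ε)r) ≥ e^{-r}. Then f_u(t) ≥ e^{-d}e^{-t} for all t ≥ 0. -/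
/-! Log-concavity along the segment from `0` to `(1 - ε) r • u` interpolates the bounds
`f 0 = e^{-d}` and `f ((1 - ε) r • u) ≥ e^{-r}`; at `t • u` this gives `f (t • u) ≥ e^{-d} e^{-t/(1-ε)}`,
as long as `t ≤ (1 - ε) r`. Since `r > 1/ε`, that holds for all small `ε`, and `ε → 0` finishes. -/

open Real Filter Topology

section LogConcave

variable {E : Type*} [AddCommGroup E] [Module ℝ E] {f : E → ℝ}
  (hflc : ∀ x y : E, ∀ p q : ℝ, 0 ≤ p → 0 ≤ q → p + q = 1 →
    f x ^ p * f y ^ q ≤ f (p • x + q • y))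
include hflc

theorem exp_neg_le_of_logConcave {x y : E} {a b q : ℝ} (hq0 : 0 ≤ q) (hq1 : q ≤ 1)
    (hx : exp (-a) ≤ f x) (hy : exp (-b) ≤ f y) :
    exp (-((1 - q) * a + q * b)) ≤ f ((1 - q) • x + q • y) :=
  calc exp (-((1 - q) * a + q * b)) = exp (-a) ^ (1 - q) * exp (-b) ^ q := by
        rw [← exp_mul, ← exp_mul, ← exp_add]; ring_nf
    _ ≤ f x ^ (1 - q) * f y ^ q :=
        mul_le_mul (rpow_le_rpow (exp_pos _).le hx (by linarith))
          (rpow_le_rpow (exp_pos _).le hy hq0) (rpow_nonneg (exp_pos _).le _)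
          (rpow_nonneg ((exp_pos _).le.trans hx) _)
    _ ≤ f ((1 - q) • x + q • y) := hflc x y _ _ (by linarith) hq0 (by ring)

theorem exp_neg_mul_exp_neg_div_le_of_logConcave {a : ℝ} (ha : 0 ≤ a) (h0 : exp (-a) ≤ f 0)
    (v : E) {t ε r : ℝ} (ht : 0 ≤ t) (hε : ε < 1) (hr : 0 < r) (htr : t ≤ (1 - ε) * r)
    (hfr : exp (-r) ≤ f (((1 - ε) * r) • v)) :
    exp (-a) * exp (-(t / (1 - ε))) ≤ f (t • v) := by
  have hR : 0 < (1 - ε) * r := mul_pos (by linarith) hr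
  set q := t / ((1 - ε) * r)
  have hq0 : 0 ≤ q := div_nonneg ht hR.le
  have hq1 : q ≤ 1 := (div_le_one hR).2 htr
  have hinterp := exp_neg_le_of_logConcave hflc hq0 hq1 h0 hfr
  rw [smul_zero, zero_add, smul_smul, div_mul_cancel₀ t hR.ne'] at hinterp
  refine le_trans ?_ hinterp
  rw [← exp_add, exp_le_exp]
  have hrq : q * r = t / (1 - ε) := by
    simp only [q]; field_simp
  nlinarith

end LogConcave

theorem stmt_16_general (d : ℕ) (f : EuclideanSpace ℝ (Fin d) → ℝ)
    (hflc : ∀ x y : EuclideanSpace ℝ (Fin d), ∀ p q : ℝ, 0 ≤ p → 0 ≤ q → p + q = 1 →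
      f x ^ p * f y ^ q ≤ f (p • x + q • y))
    (hf0d : f 0 = Real.exp (-(d : ℝ)))
    (u : EuclideanSpace ℝ (Fin d))
    (hacc : ∀ ε : ℝ, 0 < ε → ε < 1 → ∃ r : ℝ, 1 / ε < r ∧
      Real.exp (-r) ≤ f (((1 - ε) * r) • u)) :
    ∀ t : ℝ, 0 ≤ t → Real.exp (-(d : ℝ)) * Real.exp (-t) ≤ f (t • u) := by
  intro t ht
  have hlim : Tendsto (fun ε => exp (-(d : ℝ)) * exp (-(t / (1 - ε)))) (𝓝[>] 0)
      (𝓝 (exp (-(d : ℝ)) * exp (-t))) := by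
    have hcont : ContinuousAt (fun ε : ℝ => exp (-(d : ℝ)) * exp (-(t / (1 - ε)))) 0 :=
      ContinuousAt.mul continuousAt_const
        ((continuousAt_const.div (continuousAt_const.sub continuousAt_id) (by norm_num)).neg.rexp)
    simpa using hcont.tendsto.mono_left nhdsWithin_le_nhds
  refine le_of_tendsto hlim ?_
  filter_upwards [Ioo_mem_nhdsGT (by positivity : (0 : ℝ) < 1 / (t + 1))] with ε ⟨hε0, hεt⟩
  have hε1 : ε < 1 := hεt.trans_le (div_le_one_of_le₀ (by linarith) (by linarith))
  obtain ⟨r, hεr, hfr⟩ := hacc ε hε0 hε1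
  have hr : 1 < ε * r := by rwa [div_lt_iff₀' hε0] at hεr
  have htε : (t + 1) * ε < 1 := by rwa [lt_div_iff₀' (by linarith)] at hεt
  exact exp_neg_mul_exp_neg_div_le_of_logConcave hflc (Nat.cast_nonneg d) hf0d.ge u ht hε1
    (by nlinarith) (by nlinarith) hfr

theorem stmt_16 (d : ℕ) (hd : 1 ≤ d) (f : EuclideanSpace ℝ (Fin d) → ℝ)
    (hf0 : ∀ x, 0 ≤ f x)
    (hflc : ∀ x y : EuclideanSpace ℝ (Fin d), ∀ p q : ℝ, 0 ≤ p → 0 ≤ q → p + q = 1 →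
      f x ^ p * f y ^ q ≤ f (p • x + q • y))
    (hf0d : f 0 = Real.exp (-(d : ℝ))) (hsup : ∀ x, f x ≤ Real.exp (-(d : ℝ)))
    (hupper : ∀ x, f x ≤ Real.exp (-‖x‖))
    (u : EuclideanSpace ℝ (Fin d)) (hu : ‖u‖ = 1)
    (hacc : ∀ ε : ℝ, 0 < ε → ε < 1 → ∃ r : ℝ, 1 / ε < r ∧
      Real.exp (-r) ≤ f (((1 - ε) * r) • u)) :
    ∀ t : ℝ, 0 ≤ t → Real.exp (-(d : ℝ)) * Real.exp (-t) ≤ f (t • u) :=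
  stmt_16_general d f hflc hf0d u hacc
end
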